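/- arXiv:0709.0291 — 2 statements merged into one kernel-verified Lean document; each statement's English description precedes it below -/
import Mathlib

section
/- For any finite simple graph Y and any edge e, the number of acyclic orientations satisfies α(Y) = α(Y−e) + α(Y/e), where Y−e is edge deletion and Y/e is edge contraction. -/
/-! Split the acyclic orientations of `Y` by the direction of `e = vw`. Those with `v → w`
correspond, by restriction, to the acyclic orientations of `Y - e` without a directed path from
`w` to `v`, and symmetrically. An acyclic orientation of `Y - e` cannot have paths both ways, so
inclusion–exclusion gives `α(Y) = α(Y - e) + N`, where `N` counts the acyclic orientations of
`Y - e` with no directed path between `v` and `w`. These are exactly the ones whose image under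
the identification `w ↦ v` is acyclic, and taking images is a bijection onto the acyclic
orientations of `Y / e`, the image of `Y - e`. -/

namespace AcycPaper

variable {V : Type*}

/-- `r` is an orientation of the graph `Y`: exactly one direction per edge. -/
def IsOrientation (Y : SimpleGraph V) (r : V → V → Prop) : Prop :=
  (∀ i j, Y.Adj i j ↔ (r i j ∨ r j i)) ∧ ∀ i j, r i j → ¬ r j i

/-- A relation is acyclic if it has no directed cycles. -/
def IsAcyclicRel (r : V → V → Prop) : Prop := ∀ v, ¬ Relation.TransGen r v v

/-- The set of acyclic orientations of `Y`. -/
def Acyc (Y : SimpleGraph V) : Set (V → V → Prop) :=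
  {r | IsOrientation Y r ∧ IsAcyclicRel r}

/-- `v` is a source: no edge points into `v`. -/
def IsSource (r : V → V → Prop) (v : V) : Prop := ∀ j, ¬ r j v

open Classical in
/-- Click (source-to-sink move) at `v`: reverse all edges incident to `v`. -/
def click (r : V → V → Prop) (v : V) : V → V → Prop :=
  fun i j => if v = i ∨ v = j then r j i else r i j

/-- One click step between acyclic orientations. -/
def ClickStep (Y : SimpleGraph V) (r r' : V → V → Prop) : Prop :=
  r ∈ Acyc Y ∧ ∃ v, IsSource r v ∧ r' = click r v

/-- κ-equivalence: the equivalence relation generated by clicks. -/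
def KEquiv (Y : SimpleGraph V) : (V → V → Prop) → (V → V → Prop) → Prop :=
  Relation.EqvGen (ClickStep Y)

/-- The set of κ-equivalence classes of acyclic orientations. -/
def KQuot (Y : SimpleGraph V) := Quot (fun a b : Acyc Y => ClickStep Y a.1 b.1)

/-- κ(Y): number of κ-equivalence classes. -/
noncomputable def kappa (Y : SimpleGraph V) : ℕ := Nat.card (KQuot Y)

/-- α(Y): number of acyclic orientations. -/
noncomputable def alpha (Y : SimpleGraph V) : ℕ := Nat.card (Acyc Y)


/-- The simple graph obtained from Y by contracting the edge {v,w}: the vertex w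
becomes isolated and its former neighbours are attached to v instead. -/
def contractG (Y : SimpleGraph V) (v w : V) : SimpleGraph V where
  Adj a b := a ≠ w ∧ b ≠ w ∧ a ≠ b ∧
    ((Y.deleteEdges {s(v, w)}).Adj a b ∨ (a = v ∧ Y.Adj w b) ∨ (b = v ∧ Y.Adj a w))
  symm := by
    constructor
    rintro a b ⟨h1, h2, h3, h4⟩
    refine ⟨h2, h1, h3.symm, ?_⟩
    rcases h4 with h | ⟨rfl, h⟩ | ⟨rfl, h⟩
    · exact Or.inl h.symm
    · exact Or.inr (Or.inr ⟨rfl, h.symm⟩)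
    · exact Or.inr (Or.inl ⟨rfl, h.symm⟩)
  loopless := by constructor; rintro a ⟨_, _, h, _⟩; exact h rfl

/-- The orientation induced on the deleted graph Y − e (restriction). -/
def delRel (r : V → V → Prop) (v w : V) : V → V → Prop :=
  fun i j => r i j ∧ ¬((i = v ∧ j = w) ∨ (i = w ∧ j = v))

open Classical in
/-- The orientation obtained from r by reversing the edge {v,w}. -/
def revEdge (r : V → V → Prop) (v w : V) : V → V → Prop :=
  fun i j => if (i = v ∧ j = w) ∨ (i = w ∧ j = v) then r j i else r i j

/-- The orientation induced on the contracted graph Y/e. -/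
def contractRel (r : V → V → Prop) (v w : V) : V → V → Prop :=
  fun a b => a ≠ w ∧ b ≠ w ∧ a ≠ b ∧
    (delRel r v w a b ∨ (a = v ∧ r w b) ∨ (b = v ∧ r a w))

open Relation

section Arcs

theorem IsAcyclicRel.mono {r s : V → V → Prop} (hs : IsAcyclicRel s) (hrs : r ≤ s) :
    IsAcyclicRel r :=
  fun x hx => hs x (TransGen.mono hrs x x hx)

def addArc (ρ : V → V → Prop) (a b : V) : V → V → Prop :=
  fun i j => ρ i j ∨ (i = a ∧ j = b)

theorem transGen_addArc {ρ : V → V → Prop} {a b x y : V} (h : TransGen (addArc ρ a b) x y) :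
    TransGen ρ x y ∨ (ReflTransGen ρ x a ∧ ReflTransGen ρ b y) := by
  induction h with
  | single hxy =>
    rcases hxy with hxy | ⟨rfl, rfl⟩
    · exact Or.inl (.single hxy)
    · exact Or.inr ⟨.refl, .refl⟩
  | tail _ hyz ih =>
    rcases hyz with hyz | ⟨rfl, rfl⟩
    · exact ih.imp (·.tail hyz) fun ⟨hxa, hby⟩ => ⟨hxa, hby.tail hyz⟩
    · exact Or.inr ⟨ih.elim TransGen.to_reflTransGen And.left, .refl⟩

theorem isAcyclicRel_addArc {ρ : V → V → Prop} {a b : V} (hρ : IsAcyclicRel ρ) (hab : a ≠ b)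
    (hba : ¬TransGen ρ b a) : IsAcyclicRel (addArc ρ a b) := by
  intro x hx
  rcases transGen_addArc hx with h | ⟨hxa, hbx⟩
  · exact hρ x h
  · exact (reflTransGen_iff_eq_or_transGen.1 (hbx.trans hxa)).elim hab hba

end Arcs

section Image

variable {W : Type*}

/-- A path of the image lifts to a path of `ρ` except that it may jump between points of `S`;
the second disjunct records a lift that has jumped. -/
theorem exists_lift_of_transGen_map {ρ : V → V → Prop} {f : V → W} {S : Set V}
    (hf : ∀ x y, f x = f y → x = y ∨ x ∈ S ∧ y ∈ S) {a b : W}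
    (h : TransGen (Relation.Map ρ f f) a b) :
    ∃ x y, f x = a ∧ f y = b ∧
      (TransGen ρ x y ∨ (∃ s ∈ S, ReflTransGen ρ x s) ∧ ∃ s ∈ S, TransGen ρ s y) := by
  induction h with
  | single hab =>
    obtain ⟨x, y, hxy, rfl, rfl⟩ := hab
    exact ⟨x, y, rfl, rfl, Or.inl (.single hxy)⟩
  | tail _ hbc ih =>
    obtain ⟨x, y, rfl, hy, hpath⟩ := ih
    obtain ⟨y', z, hy'z, hy', rfl⟩ := hbc
    refine ⟨x, z, rfl, rfl, ?_⟩
    rcases hf y' y (hy'.trans hy.symm) with rfl | ⟨hy'S, hyS⟩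
    · exact hpath.imp (·.tail hy'z) fun ⟨hxS, s, hs, hsy⟩ => ⟨hxS, s, hs, hsy.tail hy'z⟩
    · exact Or.inr ⟨hpath.elim (fun h => ⟨y, hyS, h.to_reflTransGen⟩) And.left,
        y', hy'S, .single hy'z⟩

theorem isAcyclicRel_map {ρ : V → V → Prop} {f : V → W} {S : Set V}
    (hf : ∀ x y, f x = f y → x = y ∨ x ∈ S ∧ y ∈ S) (hρ : IsAcyclicRel ρ)
    (hS : ∀ s ∈ S, ∀ s' ∈ S, ¬TransGen ρ s s') : IsAcyclicRel (Relation.Map ρ f f) := by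
  intro a ha
  obtain ⟨x, y, hx, hy, hpath⟩ := exists_lift_of_transGen_map hf ha
  rcases hf x y (hx.trans hy.symm) with rfl | ⟨hxS, hyS⟩
  · rcases hpath with h | ⟨⟨s, hs, hxs⟩, s', hs', hs'x⟩
    · exact hρ x h
    · exact hS s' hs' s hs (hs'x.trans_left hxs)
  · rcases hpath with h | ⟨-, s', hs', hs'y⟩
    · exact hS x hxS y hyS h
    · exact hS s' hs' y hyS hs'y

def orientationComap (G : SimpleGraph V) (f : V → W) (c : W → W → Prop) : V → V → Prop :=
  fun x y => G.Adj x y ∧ c (f x) (f y)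

variable {G : SimpleGraph V} {H : SimpleGraph W} {f : V → W}

theorem not_transGen_orientationComap {c : W → W → Prop} (hc : IsAcyclicRel c) {x y : V}
    (hxy : f x = f y) : ¬TransGen (orientationComap G f c) x y := by
  intro h
  have hc' : TransGen c (f x) (f y) := TransGen.lift f (fun _ _ h => h.2) x y h
  rw [hxy] at hc'
  exact hc (f y) hc'

theorem isOrientation_orientationComap (hH : ∀ a b, H.Adj a b ↔ Relation.Map G.Adj f f a b)
    {c : W → W → Prop} (hc : IsOrientation H c) : IsOrientation G (orientationComap G f c) := by
  refine ⟨fun x y => ⟨fun hxy => ?_, ?_⟩, fun x y hxy hyx => hc.2 _ _ hxy.2 hyx.2⟩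
  · exact ((hc.1 _ _).1 ((hH _ _).2 ⟨x, y, hxy, rfl, rfl⟩)).imp (⟨hxy, ·⟩) (⟨hxy.symm, ·⟩)
  · rintro (h | h)
    exacts [h.1, h.1.symm]

theorem map_orientationComap (hH : ∀ a b, H.Adj a b ↔ Relation.Map G.Adj f f a b)
    {c : W → W → Prop} (hc : IsOrientation H c) :
    Relation.Map (orientationComap G f c) f f = c := by
  funext a b
  refine propext ⟨fun ⟨x, y, ⟨_, h⟩, hx, hy⟩ => hx ▸ hy ▸ h, fun hab => ?_⟩
  obtain ⟨x, y, hxy, rfl, rfl⟩ := (hH a b).1 ((hc.1 a b).2 (Or.inl hab))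
  exact ⟨x, y, ⟨hxy, hab⟩, rfl, rfl⟩

theorem orientationComap_map {ρ : V → V → Prop} (hρ : IsOrientation G ρ)
    (hacyc : IsAcyclicRel (Relation.Map ρ f f)) :
    orientationComap G f (Relation.Map ρ f f) = ρ := by
  funext x y
  refine propext ⟨fun ⟨hxy, hmap⟩ => ?_, fun h => ⟨(hρ.1 x y).2 (Or.inl h), x, y, h, rfl, rfl⟩⟩
  exact ((hρ.1 x y).1 hxy).resolve_right fun hyx =>
    hacyc (f x) (.tail (.single hmap) ⟨y, x, hyx, rfl, rfl⟩)

theorem isOrientation_map (hH : ∀ a b, H.Adj a b ↔ Relation.Map G.Adj f f a b)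
    {ρ : V → V → Prop} (hρ : IsOrientation G ρ) (hacyc : IsAcyclicRel (Relation.Map ρ f f)) :
    IsOrientation H (Relation.Map ρ f f) := by
  refine ⟨fun a b => ?_, fun a b hab hba => hacyc a (.tail (.single hab) hba)⟩
  rw [hH]
  constructor
  · rintro ⟨x, y, hxy, rfl, rfl⟩
    exact ((hρ.1 x y).1 hxy).imp (⟨x, y, ·, rfl, rfl⟩) (⟨y, x, ·, rfl, rfl⟩)
  · rintro (⟨x, y, h, rfl, rfl⟩ | ⟨x, y, h, rfl, rfl⟩)
    · exact ⟨x, y, (hρ.1 x y).2 (Or.inl h), rfl, rfl⟩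
    · exact ⟨y, x, (hρ.1 y x).2 (Or.inr h), rfl, rfl⟩

theorem ncard_acyc_isAcyclicRel_map (hH : ∀ a b, H.Adj a b ↔ Relation.Map G.Adj f f a b) :
    {ρ ∈ Acyc G | IsAcyclicRel (Relation.Map ρ f f)}.ncard = alpha H := by
  refine Set.ncard_congr (fun ρ _ => Relation.Map ρ f f)
    (fun ρ hρ => ⟨isOrientation_map hH hρ.1.1 hρ.2, hρ.2⟩) (fun ρ₁ ρ₂ hρ₁ hρ₂ h => ?_)
    (fun c hc => ⟨orientationComap G f c, ⟨⟨isOrientation_orientationComap hH hc.1,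
      fun x => not_transGen_orientationComap hc.2 rfl⟩, ?_⟩, map_orientationComap hH hc.1⟩)
  · rw [← orientationComap_map hρ₁.1.1 hρ₁.2, ← orientationComap_map hρ₂.1.1 hρ₂.2, h]
  · rw [map_orientationComap hH hc.1]
    exact hc.2

end Image

section DeletionContraction

variable {Y : SimpleGraph V} {v w : V}

theorem deleteEdges_adj_iff {i j : V} :
    (Y.deleteEdges {s(v, w)}).Adj i j ↔ Y.Adj i j ∧ ¬((i = v ∧ j = w) ∨ (i = w ∧ j = v)) := by
  rw [SimpleGraph.deleteEdges_adj, Set.mem_singleton_iff, Sym2.eq_iff]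

theorem isOrientation_delRel {r : V → V → Prop} (hr : IsOrientation Y r) :
    IsOrientation (Y.deleteEdges {s(v, w)}) (delRel r v w) := by
  refine ⟨fun i j => ?_, fun i j hij hji => hr.2 i j hij.1 hji.1⟩
  rw [deleteEdges_adj_iff, hr.1]
  unfold delRel
  tauto

theorem isOrientation_addArc (he : Y.Adj v w) {ρ : V → V → Prop}
    (hρ : IsOrientation (Y.deleteEdges {s(v, w)}) ρ) : IsOrientation Y (addArc ρ v w) := by
  have hD : ∀ i j, ρ i j → Y.Adj i j ∧ ¬((i = v ∧ j = w) ∨ (i = w ∧ j = v)) :=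
    fun i j h => deleteEdges_adj_iff.1 ((hρ.1 i j).2 (Or.inl h))
  refine ⟨fun i j => ⟨fun hij => ?_, ?_⟩, ?_⟩
  · by_cases he' : (i = v ∧ j = w) ∨ (i = w ∧ j = v)
    · unfold addArc; tauto
    · exact ((hρ.1 i j).1 (deleteEdges_adj_iff.2 ⟨hij, he'⟩)).imp Or.inl Or.inl
  · rintro ((h | ⟨rfl, rfl⟩) | (h | ⟨rfl, rfl⟩))
    exacts [(hD _ _ h).1, he, (hD _ _ h).1.symm, he.symm]
  · rintro i j (hij | ⟨rfl, rfl⟩) (hji | ⟨hj, hi⟩)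
    · exact hρ.2 i j hij hji
    · exact (hD _ _ hij).2 (Or.inr ⟨hi, hj⟩)
    · exact (hD _ _ hji).2 (Or.inr ⟨rfl, rfl⟩)
    · exact he.ne hj.symm

theorem delRel_addArc {ρ : V → V → Prop} (hρ : IsOrientation (Y.deleteEdges {s(v, w)}) ρ) :
    delRel (addArc ρ v w) v w = ρ := by
  funext i j
  have := fun h => (deleteEdges_adj_iff.1 ((hρ.1 i j).2 (Or.inl h))).2
  unfold delRel addArc
  apply propext
  tauto

theorem addArc_delRel {r : V → V → Prop} (hr : IsOrientation Y r) (hvw : r v w) :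
    addArc (delRel r v w) v w = r := by
  funext i j
  have hwv : ¬r w v := hr.2 v w hvw
  unfold delRel addArc
  apply propext
  constructor
  · rintro (⟨h, -⟩ | ⟨rfl, rfl⟩)
    exacts [h, hvw]
  · intro h
    by_cases hij : i = v ∧ j = w
    · exact Or.inr hij
    · refine Or.inl ⟨h, ?_⟩
      rintro (hij' | ⟨rfl, rfl⟩)
      exacts [hij hij', hwv h]

theorem ncard_acyc_with_arc (he : Y.Adj v w) :
    {r ∈ Acyc Y | r v w}.ncard =
      {ρ ∈ Acyc (Y.deleteEdges {s(v, w)}) | ¬TransGen ρ w v}.ncard := by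
  refine Set.ncard_congr (fun r _ => delRel r v w) (fun r ⟨hr, hvw⟩ => ?_)
    (fun r₁ r₂ ⟨hr₁, hvw₁⟩ ⟨hr₂, hvw₂⟩ h => ?_) (fun ρ ⟨hρ, hwv⟩ => ?_)
  · refine ⟨⟨isOrientation_delRel hr.1, hr.2.mono fun _ _ h => h.1⟩, fun hwv => ?_⟩
    exact hr.2 w ((TransGen.mono (fun _ _ h => h.1) w v hwv).tail hvw)
  · rw [← addArc_delRel hr₁.1 hvw₁, ← addArc_delRel hr₂.1 hvw₂]
    exact congrArg (addArc · v w) h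
  · exact ⟨addArc ρ v w, ⟨⟨isOrientation_addArc he hρ.1, isAcyclicRel_addArc hρ.2 he.ne hwv⟩,
      Or.inr ⟨rfl, rfl⟩⟩, delRel_addArc hρ.1⟩

theorem alpha_eq_ncard_add_ncard [Finite V] (he : Y.Adj v w) :
    alpha Y = {r ∈ Acyc Y | r v w}.ncard + {r ∈ Acyc Y | r w v}.ncard := by
  change (Acyc Y).ncard = _
  rw [← Set.ncard_union_eq]
  · congr 1
    ext r
    simp only [Set.mem_union, Set.mem_ofPred_eq, ← and_or_left]
    exact ⟨fun hr => ⟨hr, (hr.1.1 v w).1 he⟩, And.left⟩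
  · exact Set.disjoint_left.2 fun r ⟨hr, hvw⟩ ⟨_, hwv⟩ => hr.1.2 v w hvw hwv

theorem update_id_eq_update_id [DecidableEq V] {x y : V}
    (h : Function.update id w v x = Function.update id w v y) :
    x = y ∨ x ∈ ({v, w} : Set V) ∧ y ∈ ({v, w} : Set V) := by
  have hσw : Function.update id w v w = v := Function.update_self w v id
  have hσ : ∀ x, x ≠ w → Function.update id w v x = x := fun x hx => Function.update_of_ne hx v id
  by_cases hx : x = w <;> by_cases hy : y = w
  · exact Or.inl (hx.trans hy.symm)
  · rw [hx, hσw, hσ y hy] at h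
    exact Or.inr ⟨Or.inr hx, Or.inl h.symm⟩
  · rw [hy, hσw, hσ x hx] at h
    exact Or.inr ⟨Or.inl h, Or.inr hy⟩
  · rw [hσ x hx, hσ y hy] at h
    exact Or.inl h

theorem contractG_adj_iff [DecidableEq V] (hvw : v ≠ w) {a b : V} :
    (contractG Y v w).Adj a b ↔
      Relation.Map (Y.deleteEdges {s(v, w)}).Adj (Function.update id w v)
        (Function.update id w v) a b := by
  have hσw : Function.update id w v w = v := Function.update_self w v id
  have hσ : ∀ x, x ≠ w → Function.update id w v x = x := fun x hx => Function.update_of_ne hx v id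
  constructor
  · rintro ⟨ha, hb, hab, hD | ⟨rfl, h⟩ | ⟨rfl, h⟩⟩
    · exact ⟨a, b, hD, hσ a ha, hσ b hb⟩
    · refine ⟨w, b, deleteEdges_adj_iff.2 ⟨h, ?_⟩, hσw, hσ b hb⟩
      rintro (⟨-, h⟩ | ⟨-, h⟩)
      exacts [hb h, hab h.symm]
    · refine ⟨a, w, deleteEdges_adj_iff.2 ⟨h, ?_⟩, hσ a ha, hσw⟩
      rintro (⟨h, -⟩ | ⟨h, -⟩)
      exacts [hab h, ha h]
  · rintro ⟨x, y, hxy, rfl, rfl⟩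
    obtain ⟨hY, hne⟩ := deleteEdges_adj_iff.1 hxy
    by_cases hx : x = w <;> by_cases hy : y = w
    · exact absurd (hx.trans hy.symm) hY.ne
    · rw [hx] at hY hne
      rw [hx, hσw, hσ y hy]
      exact ⟨hvw, hy, fun h => hne (Or.inr ⟨rfl, h.symm⟩), Or.inr (Or.inl ⟨rfl, hY⟩)⟩
    · rw [hy] at hY hne
      rw [hy, hσw, hσ x hx]
      exact ⟨hx, hvw, fun h => hne (Or.inl ⟨h, rfl⟩), Or.inr (Or.inr ⟨rfl, hY⟩)⟩
    · rw [hσ x hx, hσ y hy]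
      exact ⟨hx, hy, hY.ne, Or.inl hxy⟩

theorem isAcyclicRel_map_contract_iff [DecidableEq V] (hvw : v ≠ w) {ρ : V → V → Prop}
    (hρ : IsAcyclicRel ρ) :
    IsAcyclicRel (Relation.Map ρ (Function.update id w v) (Function.update id w v)) ↔
      ¬TransGen ρ w v ∧ ¬TransGen ρ v w := by
  set σ : V → V := Function.update id w v
  have hσw : σ w = v := Function.update_self w v id
  have hσ : ∀ x, x ≠ w → σ x = x := fun x hx => Function.update_of_ne hx v id
  constructor
  · intro h
    have hlift : ∀ {x y}, TransGen ρ x y → TransGen (Relation.Map ρ σ σ) (σ x) (σ y) :=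
      fun hxy => TransGen.lift σ (fun x y h => ⟨x, y, h, rfl, rfl⟩) _ _ hxy
    refine ⟨fun hwv => h v ?_, fun hvw' => h v ?_⟩
    · simpa [hσw, hσ v hvw] using hlift hwv
    · simpa [hσw, hσ v hvw] using hlift hvw'
  · rintro ⟨hwv, hvw'⟩
    refine isAcyclicRel_map (fun _ _ => update_id_eq_update_id) hρ fun s hs s' hs' => ?_
    rcases hs with rfl | rfl <;> rcases hs' with rfl | rfl
    exacts [hρ _, hvw', hwv, hρ _]

theorem ncard_acyc_no_path (he : Y.Adj v w) :
    {ρ ∈ Acyc (Y.deleteEdges {s(v, w)}) | ¬TransGen ρ w v ∧ ¬TransGen ρ v w}.ncard =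
      alpha (contractG Y v w) := by
  classical
  rw [← ncard_acyc_isAcyclicRel_map fun a b => contractG_adj_iff he.ne]
  congr 1
  ext ρ
  simp only [Set.mem_ofPred_eq]
  exact and_congr_right fun hρ => (isAcyclicRel_map_contract_iff he.ne hρ.2).symm

end DeletionContraction

theorem alpha_deletion_contraction_general {V : Type*} [Fintype V]
    (Y : SimpleGraph V) (v w : V) (he : Y.Adj v w) :
    alpha Y = alpha (Y.deleteEdges {s(v, w)}) + alpha (contractG Y v w) := by
  have hswap : Y.deleteEdges {s(w, v)} = Y.deleteEdges {s(v, w)} := by rw [Sym2.eq_swap]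
  have hwv := ncard_acyc_with_arc he.symm
  rw [hswap] at hwv
  have hcover : {ρ ∈ Acyc (Y.deleteEdges {s(v, w)}) | ¬TransGen ρ w v ∨ ¬TransGen ρ v w} =
      Acyc (Y.deleteEdges {s(v, w)}) :=
    Set.sep_eq_self_iff_mem_true.2 fun ρ hρ => not_and_or.1 fun ⟨hwv, hvw⟩ => hρ.2 v (hvw.trans hwv)
  rw [alpha_eq_ncard_add_ncard he, ncard_acyc_with_arc he, hwv, ← Set.ncard_union_add_ncard_inter,
    ← Set.sep_or, ← Set.sep_and, hcover, ncard_acyc_no_path he]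
  rfl

/-- the number of acyclic orientations satisfies the
deletion–contraction recursion α(Y) = α(Y−e) + α(Y/e) for every edge e = {v,w}. -/
theorem alpha_deletion_contraction {V : Type*} [Fintype V] [DecidableEq V]
    (Y : SimpleGraph V) (v w : V) (he : Y.Adj v w) :
    alpha Y = alpha (Y.deleteEdges {s(v, w)}) + alpha (contractG Y v w) :=
  alpha_deletion_contraction_general Y v w he

end AcycPaper
end

section
/- Let Y be a connected finite simple graph. If Y is not bipartite, then δ(Y) = κ(Y)/2; if Y is bipartite, then δ(Y) = (κ(Y)+1)/2. In either case δ(Y) = ⌈κ(Y)/2⌉. -/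
namespace AcycPaper

variable {V : Type*}

/-- The reversal of an orientation: every edge direction is reversed. -/
def reverseRel (r : V → V → Prop) : V → V → Prop := fun i j => r j i

/-- One step of the coarser relation: a click, or a full reversal. -/
def DStep (Y : SimpleGraph V) (r r' : V → V → Prop) : Prop :=
  ClickStep Y r r' ∨ (r ∈ Acyc Y ∧ r' = reverseRel r)

/-- The set of δ-equivalence classes of acyclic orientations. -/
def DQuot (Y : SimpleGraph V) := Quot (fun a b : Acyc Y => DStep Y a.1 b.1)

/-- δ(Y): number of δ-equivalence classes. -/
noncomputable def delta (Y : SimpleGraph V) : ℕ := Nat.card (DQuot Y)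

end AcycPaper

/-! Reversing all edges commutes with clicks, so it induces an involution on the κ-classes
whose orbits are the δ-classes; hence `2 δ = κ + #(fixed κ-classes)`. The flow of an
orientation around a closed walk (forward minus backward edges) is a click invariant that
reversal negates, so a fixed class has zero flow and is represented by orienting every edge
upwards along a grading `θ : V → ℤ`, a function that changes by `±1` along each edge. Gradings
exist exactly when `Y` is bipartite, and on a connected graph any two gradings give
click-equivalent orientations. So there is one fixed class when `Y` is bipartite and none
otherwise. -/

namespace Function.Involutive

variable {X : Type*} {f : X → X}

theorem quot_mk_eq_iff (hf : Involutive f) {x y : X} :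
    Quot.mk (fun a b => f a = b) x = Quot.mk _ y ↔ y = x ∨ y = f x := by
  have hequiv : Equivalence fun a b : X => b = a ∨ b = f a := by
    refine ⟨fun _ => Or.inl rfl, ?_, ?_⟩
    · rintro a b (rfl | rfl)
      exacts [Or.inl rfl, Or.inr (hf a).symm]
    · rintro a b c (rfl | rfl) (rfl | rfl)
      exacts [Or.inl rfl, Or.inr rfl, Or.inr rfl, Or.inl (hf a)]
  refine ⟨fun h => hequiv.eqvGen_iff.mp ?_, ?_⟩
  · exact (Quot.eqvGen_exact h).mono fun a b hab => Or.inr hab.symm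
  rintro (rfl | rfl)
  exacts [rfl, Quot.sound rfl]

open Finset in
theorem two_mul_card_quot [Finite X] (hf : Involutive f) :
    2 * Nat.card (Quot fun x y => f x = y) = Nat.card X + Nat.card {x // f x = x} := by
  classical
  have := Fintype.ofFinite X
  have := Fintype.ofFinite (Quot fun x y => f x = y)
  let π : X → Quot fun x y => f x = y := Quot.mk _
  have hfiber : ∀ q, #{y | π y = q} + #{y | f y = y ∧ π y = q} = 2 := by
    intro q
    obtain ⟨x, rfl⟩ : ∃ x, π x = q := Quot.exists_rep q
    have hclass : ∀ y, π y = π x ↔ y = x ∨ y = f x := fun y => by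
      rw [eq_comm, hf.quot_mk_eq_iff]
    simp_rw [hclass]
    by_cases hx : f x = x
    · have h1 : ({y | y = x ∨ y = f x} : Finset X) = {x} := by ext; simp [hx]
      have h2 : ({y | f y = y ∧ (y = x ∨ y = f x)} : Finset X) = {x} := by ext; aesop
      simp [h1, h2]
    · have h1 : ({y | y = x ∨ y = f x} : Finset X) = {x, f x} := by ext; simp
      have h2 : ({y | f y = y ∧ (y = x ∨ y = f x)} : Finset X) = ∅ := by
        ext y
        simp only [mem_filter, mem_univ, true_and, notMem_empty, iff_false]
        rintro ⟨hy, rfl | rfl⟩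
        exacts [hx hy, hx ((hf x).symm.trans hy).symm]
      rw [h1, h2, card_pair (Ne.symm hx), card_empty]
  simp only [Nat.card_eq_fintype_card, Fintype.card_subtype]
  rw [← card_univ (α := X), card_eq_sum_card_fiberwise (f := π) fun _ _ => mem_univ _,
    card_eq_sum_card_fiberwise (f := π) fun _ _ => mem_univ _, ← sum_add_distrib]
  simp [filter_filter, hfiber, mul_comm]

end Function.Involutive

namespace AcycPaper

open SimpleGraph Function

variable {V : Type*} {Y : SimpleGraph V} {r s : V → V → Prop}

lemma IsOrientation.adj (h : IsOrientation Y r) {i j : V} (hr : r i j) : Y.Adj i j :=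
  (h.1 i j).mpr (Or.inl hr)

lemma IsOrientation.reverse (h : IsOrientation Y r) : IsOrientation Y (reverseRel r) :=
  ⟨fun i j => (h.1 i j).trans or_comm, fun i j hij hji => h.2 j i hij hji⟩

lemma IsAcyclicRel.reverse (h : IsAcyclicRel r) : IsAcyclicRel (reverseRel r) :=
  fun v hv => h v (Relation.transGen_swap.mpr hv)

lemma reverseRel_mem_Acyc (h : r ∈ Acyc Y) : reverseRel r ∈ Acyc Y :=
  ⟨h.1.reverse, h.2.reverse⟩

lemma IsAcyclicRel.of_lt (ℓ : V → ℤ) (h : ∀ i j, r i j → ℓ i < ℓ j) :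
    IsAcyclicRel r := fun v hv => by
  have hlt := hv.lift ℓ h
  rw [Relation.transGen_eq_self] at hlt
  exact lt_irrefl _ hlt

lemma click_click (r : V → V → Prop) (v : V) : click (click r v) v = r := by
  funext i j
  by_cases h : v = i ∨ v = j <;> simp [click, h, or_comm]

lemma reverseRel_click (r : V → V → Prop) (v : V) :
    reverseRel (click r v) = click (reverseRel r) v := by
  funext i j
  classical exact if_congr or_comm rfl rfl

lemma ClickStep.reverse (h : ClickStep Y r s) (hs : s ∈ Acyc Y) :
    ClickStep Y (reverseRel s) (reverseRel r) := by
  obtain ⟨-, v, hv, rfl⟩ := h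
  refine ⟨reverseRel_mem_Acyc hs, v, fun j hj => hv j ?_, ?_⟩
  · simpa [reverseRel, click] using hj
  · rw [reverseRel_click, click_click]

open Classical in
noncomputable def sgn (r : V → V → Prop) (i j : V) : ℤ := if r i j then 1 else -1

noncomputable def flow (r : V → V → Prop) : {u v : V} → Y.Walk u v → ℤ
  | _, _, .nil => 0
  | _, _, .cons (u := i) (v := j) _ p => sgn r i j + flow r p

@[simp] lemma flow_nil (r : V → V → Prop) {u : V} : flow r (.nil : Y.Walk u u) = 0 := rfl

@[simp] lemma flow_cons (r : V → V → Prop) {u v w : V} (h : Y.Adj u v) (p : Y.Walk v w) :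
    flow r (.cons h p) = sgn r u v + flow r p := rfl

lemma flow_append (r : V → V → Prop) {u v w : V} (p : Y.Walk u v) (q : Y.Walk v w) :
    flow r (p.append q) = flow r p + flow r q := by
  induction p with
  | nil => simp
  | cons h p ih => simp [ih, add_assoc]

lemma sgn_swap (hr : IsOrientation Y r) {i j : V} (hij : Y.Adj i j) : sgn r j i = -sgn r i j := by
  have := hr.2 i j
  have := (hr.1 i j).mp hij
  unfold sgn
  split_ifs <;> tauto

lemma flow_reverse (hr : IsOrientation Y r) {u v : V} (p : Y.Walk u v) :
    flow r p.reverse = -flow r p := by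
  induction p with
  | nil => simp
  | cons h p ih => simp [flow_append, ih, sgn_swap hr h]

lemma sgn_reverseRel (r : V → V → Prop) (i j : V) : sgn (reverseRel r) i j = sgn r j i := rfl

lemma flow_reverseRel (hr : IsOrientation Y r) {u v : V} (p : Y.Walk u v) :
    flow (reverseRel r) p = -flow r p := by
  induction p with
  | nil => simp
  | cons h p ih => rw [flow_cons, flow_cons, ih, sgn_reverseRel, sgn_swap hr h]; ring

open Classical in
lemma sgn_click (hr : IsOrientation Y r) {v : V} (hv : IsSource r v) {i j : V}
    (hij : Y.Adj i j) :
    sgn (click r v) i j + (if i = v then 2 else 0) = sgn r i j + (if j = v then 2 else 0) := by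
  have hor := (hr.1 i j).mp hij
  rcases eq_or_ne i v with rfl | hi
  · simp [sgn, click, hor.resolve_right (hv j), hv j, hij.ne.symm]
  rcases eq_or_ne j v with rfl | hj
  · simp [sgn, click, hor.resolve_left (hv i), hv i, hi]
  simp [sgn, click, hi, hj, hi.symm, hj.symm]

lemma flow_click_of_isSource (hr : IsOrientation Y r) {v : V} (hv : IsSource r v) {u : V}
    (p : Y.Walk u u) : flow (click r v) p = flow r p := by
  classical
  suffices ∀ {u w : V} (p : Y.Walk u w), flow (click r v) p + (if u = v then 2 else 0) =
      flow r p + (if w = v then 2 else 0) by simpa using this p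
  intro u w p
  induction p with
  | nil => simp
  | cons h p ih =>
    have := sgn_click hr hv h
    simp only [flow_cons]
    omega

def IsGrading (Y : SimpleGraph V) (θ : V → ℤ) : Prop :=
  ∀ ⦃i j⦄, Y.Adj i j → θ j = θ i + 1 ∨ θ i = θ j + 1

def upOrient (Y : SimpleGraph V) (θ : V → ℤ) : V → V → Prop :=
  fun i j => Y.Adj i j ∧ θ j = θ i + 1

variable {θ η : V → ℤ}

lemma upOrient_mem_Acyc (hθ : IsGrading Y θ) : upOrient Y θ ∈ Acyc Y := by
  refine ⟨⟨fun i j => ⟨fun h => ?_, ?_⟩, fun i j h h' => ?_⟩,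
    IsAcyclicRel.of_lt θ fun i j h => by have := h.2; omega⟩
  · rcases hθ h with h' | h'
    exacts [Or.inl ⟨h, h'⟩, Or.inr ⟨h.symm, h'⟩]
  · rintro (h | h)
    exacts [h.1, h.1.symm]
  · have := h.2
    have := h'.2
    omega

lemma IsGrading.neg (hθ : IsGrading Y θ) : IsGrading Y (-θ) := fun i j h => by
  have := hθ h
  simp only [Pi.neg_apply]
  omega

lemma reverseRel_upOrient (θ : V → ℤ) : reverseRel (upOrient Y θ) = upOrient Y (-θ) := by
  funext i j
  apply propext
  simp only [reverseRel, upOrient, Pi.neg_apply, Y.adj_comm j i]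
  constructor <;> rintro ⟨h, h'⟩ <;> exact ⟨h, by omega⟩

lemma upOrient_eq_of_sub_eq {c : ℤ} (h : ∀ v, θ v - η v = c) :
    upOrient Y θ = upOrient Y η := by
  funext i j
  apply propext
  have := h i
  have := h j
  constructor <;> rintro ⟨h, h'⟩ <;> exact ⟨h, by omega⟩

lemma IsOrientation.isGrading_and_eq_upOrient (hs : IsOrientation Y s)
    (h : ∀ i j, s i j → θ j = θ i + 1) : IsGrading Y θ ∧ s = upOrient Y θ := by
  refine ⟨fun i j hij => ((hs.1 i j).mp hij).imp (h i j) (h j i), ?_⟩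
  funext i j
  apply propext
  refine ⟨fun hij => ⟨hs.adj hij, h i j hij⟩, fun ⟨hij, hθ⟩ => ?_⟩
  refine ((hs.1 i j).mp hij).resolve_right fun hji => ?_
  have := h j i hji
  omega

lemma exists_isGrading_iff_colorable_two : (∃ θ, IsGrading Y θ) ↔ Y.Colorable 2 := by
  constructor
  · rintro ⟨θ, hθ⟩
    refine ⟨Coloring.mk (fun v => ⟨(θ v % 2).toNat, by omega⟩) fun {i j} hij heq => ?_⟩
    have := hθ hij
    have := congrArg Fin.val heq
    simp only at this
    omega
  · rintro ⟨C⟩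
    refine ⟨fun v => (C v : ℕ), fun i j hij => ?_⟩
    dsimp only
    have := Fin.val_ne_of_ne (C.valid hij)
    have := (C i).isLt
    have := (C j).isLt
    omega

lemma IsGrading.emod_two_sub_eq (hY : Y.Preconnected) (hθ : IsGrading Y θ) (hη : IsGrading Y η)
    (u v : V) : (θ u - η u) % 2 = (θ v - η v) % 2 := by
  obtain ⟨p⟩ := hY u v
  induction p with
  | nil => rfl
  | cons h p ih =>
    have := hθ h
    have := hη h
    omega

lemma IsGrading.raise [DecidableEq V] (hθ : IsGrading Y θ) {u : V}
    (hu : ∀ j, Y.Adj u j → θ j = θ u + 1) : IsGrading Y (update θ u (θ u + 2)) := by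
  intro i j hij
  have := hθ hij
  rcases eq_or_ne i u with rfl | hi
  · have := hu j hij
    simp [hij.ne.symm]
    omega
  rcases eq_or_ne j u with rfl | hj
  · have := hu i hij.symm
    simp [hi]
    omega
  simpa [hi, hj] using this

lemma isSource_upOrient {u : V} (hu : ∀ j, Y.Adj u j → θ j = θ u + 1) :
    IsSource (upOrient Y θ) u := fun j h => by
  have := hu j h.1.symm
  have := h.2
  omega

lemma click_upOrient [DecidableEq V] {u : V} (hu : ∀ j, Y.Adj u j → θ j = θ u + 1) :
    click (upOrient Y θ) u = upOrient Y (update θ u (θ u + 2)) := by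
  funext i j
  apply propext
  rcases eq_or_ne i u with rfl | hi
  · simp only [click, true_or, if_true, upOrient, update_self]
    constructor <;> rintro ⟨h, h'⟩
    · have := hu j h.symm
      omega
    · rw [update_of_ne h.ne.symm] at h'
      have := hu j h
      omega
  rcases eq_or_ne j u with rfl | hj
  · simp only [click, or_true, if_true, upOrient, update_self, update_of_ne hi]
    constructor <;> rintro ⟨h, h'⟩
    · exact ⟨h.symm, by have := hu i h; omega⟩
    · exact ⟨h.symm, by have := hu i h.symm; omega⟩
  simp [click, upOrient, hi, hj, hi.symm, hj.symm]

lemma exists_isGrading_of_flow_eq_zero (hY : Y.Connected) (hs : IsOrientation Y s)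
    (h0 : ∀ u (p : Y.Walk u u), flow s p = 0) : ∃ θ, IsGrading Y θ ∧ s = upOrient Y θ := by
  obtain ⟨u₀⟩ := hY.nonempty
  let w : ∀ v, Y.Walk u₀ v := fun v => (hY.preconnected u₀ v).some
  refine ⟨fun v => flow s (w v), hs.isGrading_and_eq_upOrient fun i j hij => ?_⟩
  have := h0 u₀ ((w i).append (.cons (hs.adj hij) (w j).reverse))
  rw [flow_append, flow_cons, flow_reverse hs, sgn, if_pos hij] at this
  omega

def KQuot.mk (a : Acyc Y) : KQuot Y := Quot.mk _ a

lemma KQuot.mk_surjective : Surjective (KQuot.mk (Y := Y)) := Quot.exists_rep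

lemma KQuot.mk_eq_mk {a b : Acyc Y} (h : ClickStep Y a.1 b.1) : KQuot.mk a = KQuot.mk b :=
  Quot.sound h

instance [Finite V] : Finite (KQuot Y) := Quot.finite _

def KQuot.rev : KQuot Y → KQuot Y :=
  Quot.lift (fun a => KQuot.mk ⟨reverseRel a.1, reverseRel_mem_Acyc a.2⟩)
    fun _ b h => (KQuot.mk_eq_mk (h.reverse b.2)).symm

lemma KQuot.rev_involutive : Involutive (KQuot.rev (Y := Y)) := by
  rintro ⟨a⟩
  rfl

def dQuotEquiv (Y : SimpleGraph V) : DQuot Y ≃ Quot fun x y : KQuot Y => x.rev = y where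
  toFun := Quot.lift (fun a => Quot.mk _ (KQuot.mk a)) fun a b h => by
    rcases h with h | ⟨-, h⟩
    · exact congrArg _ (Quot.sound h)
    · exact Quot.sound (congrArg KQuot.mk (Subtype.ext h.symm))
  invFun := Quot.lift (Quot.lift (Quot.mk _) fun _ _ h => Quot.sound (Or.inl h)) fun x y h => by
    subst h
    induction x using Quot.ind with
    | mk a => exact Quot.sound (Or.inr ⟨a.2, rfl⟩)
  left_inv := by
    rintro ⟨a⟩
    rfl
  right_inv := by
    rintro ⟨⟨a⟩⟩
    rfl

noncomputable def KQuot.flow {u : V} (p : Y.Walk u u) : KQuot Y → ℤ :=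
  Quot.lift (fun a => AcycPaper.flow a.1 p) fun a _ ⟨ha, _, hv, hb⟩ => by
    rw [hb, flow_click_of_isSource ha.1 hv]

lemma KQuot.flow_rev {u : V} (p : Y.Walk u u) (x : KQuot Y) : x.rev.flow p = -x.flow p := by
  induction x using Quot.ind with
  | mk a => exact flow_reverseRel a.2.1 p

def gradingClass (hθ : IsGrading Y θ) : KQuot Y :=
  KQuot.mk ⟨upOrient Y θ, upOrient_mem_Acyc hθ⟩

lemma gradingClass_raise [DecidableEq V] (hθ : IsGrading Y θ) {u : V}
    (hu : ∀ j, Y.Adj u j → θ j = θ u + 1) : gradingClass (hθ.raise hu) = gradingClass hθ :=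
  .symm <| KQuot.mk_eq_mk
    ⟨upOrient_mem_Acyc hθ, u, isSource_upOrient hu, (click_upOrient hu).symm⟩

lemma KQuot.rev_gradingClass (hθ : IsGrading Y θ) :
    (gradingClass hθ).rev = gradingClass hθ.neg :=
  congrArg KQuot.mk (Subtype.ext (reverseRel_upOrient θ))

lemma gradingClass_eq_of_sub_eq (hθ : IsGrading Y θ) (hη : IsGrading Y η) {c : ℤ}
    (h : ∀ v, θ v - η v = c) : gradingClass hθ = gradingClass hη :=
  congrArg KQuot.mk (Subtype.ext (upOrient_eq_of_sub_eq h))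

lemma exists_gradingClass_eq_of_rev_eq (hY : Y.Connected) {x : KQuot Y} (hx : x.rev = x) :
    ∃ θ, ∃ hθ : IsGrading Y θ, gradingClass hθ = x := by
  obtain ⟨a, rfl⟩ := KQuot.mk_surjective x
  have h0 : ∀ u (p : Y.Walk u u), flow a.1 p = 0 := fun u p => by
    have := congrArg (KQuot.flow p) hx
    rw [KQuot.flow_rev] at this
    change -flow a.1 p = flow a.1 p at this
    omega
  obtain ⟨θ, hθ, ha⟩ := exists_isGrading_of_flow_eq_zero hY a.2.1 h0
  exact ⟨θ, hθ, congrArg KQuot.mk (Subtype.ext ha.symm)⟩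

/-- While `θ - η` is not constant, the vertex minimising `(θ - η, θ)` lexicographically is a
local minimum of `θ`, and clicking it raises `θ - η` there by two. -/
theorem gradingClass_eq_of_emod_two_sub_eq [Fintype V] (D : ℤ) {θ η : V → ℤ}
    (hθ : IsGrading Y θ) (hη : IsGrading Y η) (hD : ∀ v, θ v - η v ≤ D)
    (hpar : ∀ u v, (θ u - η u) % 2 = (θ v - η v) % 2) :
    gradingClass hθ = gradingClass hη := by
  classical
  by_cases hconst : ∃ c, ∀ v, θ v - η v = c
  · obtain ⟨c, hc⟩ := hconst
    exact gradingClass_eq_of_sub_eq hθ hη hc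
  push Not at hconst
  have : Nonempty V := ⟨(hconst 0).choose⟩
  obtain ⟨u, hu⟩ := Finite.exists_min fun v => toLex (θ v - η v, θ v)
  simp only [Prod.Lex.toLex_le_toLex] at hu
  have hloc : ∀ j, Y.Adj u j → θ j = θ u + 1 := fun j hj => by
    have := hθ hj
    have := hη hj
    have := hu j
    omega
  obtain ⟨w, hw⟩ := hconst (θ u - η u)
  have hgap : θ u - η u + 2 ≤ D := by
    have := hu w
    have := hpar w u
    have := hD w
    omega
  have hd : ∀ v, update θ u (θ u + 2) v - η v = θ v - η v + if v = u then 2 else 0 := by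
    intro v
    rcases eq_or_ne v u with rfl | hv
    · simp only [update_self, if_true]
      ring
    · simp [hv]
  rw [← gradingClass_raise hθ hloc]
  refine gradingClass_eq_of_emod_two_sub_eq D (hθ.raise hloc) hη (fun v => ?_) fun v v' => ?_
  · have := hD v
    rw [hd]
    split_ifs with hv <;> [subst hv; skip] <;> omega
  · have := hpar v v'
    rw [hd, hd]
    split_ifs <;> omega
termination_by ∑ v, (D - (θ v - η v)).toNat
decreasing_by
  refine Finset.sum_lt_sum (fun v _ => ?_) ⟨u, Finset.mem_univ u, ?_⟩ <;> rw [hd]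
  · split_ifs <;> omega
  · rw [if_pos rfl]
    omega

theorem gradingClass_eq [Fintype V] (hY : Y.Preconnected) (hθ : IsGrading Y θ)
    (hη : IsGrading Y η) : gradingClass hθ = gradingClass hη :=
  gradingClass_eq_of_emod_two_sub_eq (∑ v, |θ v - η v|) hθ hη
    (fun v => (le_abs_self _).trans <| Finset.single_le_sum (f := fun v => |θ v - η v|)
      (fun _ _ => abs_nonneg _) (Finset.mem_univ v))
    (hθ.emod_two_sub_eq hY hη)

theorem card_fixedPoints_rev_of_colorable [Fintype V] (hY : Y.Connected) (hc : Y.Colorable 2) :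
    Nat.card {x : KQuot Y // x.rev = x} = 1 := by
  obtain ⟨θ, hθ⟩ := exists_isGrading_iff_colorable_two.mpr hc
  have hfix : (gradingClass hθ).rev = gradingClass hθ := by
    rw [KQuot.rev_gradingClass]
    exact gradingClass_eq hY.preconnected _ _
  refine Nat.card_eq_one_iff_exists.mpr ⟨⟨_, hfix⟩, fun ⟨x, hx⟩ => ?_⟩
  obtain ⟨η, hη, rfl⟩ := exists_gradingClass_eq_of_rev_eq hY hx
  exact Subtype.ext (gradingClass_eq hY.preconnected hη hθ)

theorem card_fixedPoints_rev_of_not_colorable (hY : Y.Connected) (hc : ¬Y.Colorable 2) :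
    Nat.card {x : KQuot Y // x.rev = x} = 0 := by
  have : IsEmpty {x : KQuot Y // x.rev = x} := ⟨fun ⟨_, hx⟩ => hc <| by
    obtain ⟨θ, hθ, -⟩ := exists_gradingClass_eq_of_rev_eq hY hx
    exact exists_isGrading_iff_colorable_two.mp ⟨θ, hθ⟩⟩
  exact Nat.card_of_isEmpty

/-- for a connected graph Y, δ(Y) = κ(Y)/2 if Y is not bipartite,
δ(Y) = (κ(Y)+1)/2 if Y is bipartite, and in either case δ(Y) = ⌈κ(Y)/2⌉. -/
theorem delta_eq_of_kappa {V : Type*} [Fintype V] (Y : SimpleGraph V)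
    (hY : Y.Connected) :
    (¬ Y.Colorable 2 → 2 * delta Y = kappa Y) ∧
    (Y.Colorable 2 → 2 * delta Y = kappa Y + 1) ∧
    delta Y = (kappa Y + 1) / 2 := by
  have hcount : 2 * delta Y = kappa Y + Nat.card {x : KQuot Y // x.rev = x} := by
    rw [delta, Nat.card_congr (dQuotEquiv Y), kappa]
    exact KQuot.rev_involutive.two_mul_card_quot
  by_cases hc : Y.Colorable 2
  · rw [card_fixedPoints_rev_of_colorable hY hc] at hcount
    exact ⟨absurd hc, fun _ => hcount, by omega⟩
  · rw [card_fixedPoints_rev_of_not_colorable hY hc] at hcount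
    exact ⟨fun _ => hcount, fun h => absurd h hc, by omega⟩

end AcycPaper
end
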